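/- Let m ≥ 1, let y_0 < y_1 < ⋯ < y_m be real numbers, let c_j < d_j for j ∈ {1,…,m}, let L_{2,j} : ℝ → ℝ be the affine map with L_{2,j}(c_j) = y_{j−1} and L_{2,j}(d_j) = y_j, and define φ_j(y) = d_j if y > y_j, φ_j(y) = L_{2,j}^{−1}(y) if y_{j−1} ≤ y ≤ y_j, φ_j(y) = c_j if y < y_{j−1}. Let f : ℝ × ℝ → ℝ, let L_{1,i} : ℝ → ℝ be any function, set f_{i,0}(x,y) = f(L_{1,i}(x), y) and f_{i,j}(x,y) = f(L_{1,i}(x), L_{2,j}(y)). Then for every real u and every y ∈ [y_0, y_m], f_{i,0}(u, y) = ∑_{j=1}^m f_{i,j}(u, φ_j(y)) − ∑_{j=1}^{m−1} f_{i,0}(u, y_j). -/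

import Mathlib

/-- The affine map `L_{2,j}(t) = y_{j−1} + (t − c_j)·(y_j − y_{j−1})/(d_j − c_j)`,
so that `L_{2,j}(c_j) = y_{j−1}` and `L_{2,j}(d_j) = y_j`. -/
noncomputable def LFun (y c d : ℕ → ℝ) (j : ℕ) (t : ℝ) : ℝ :=
  y (j - 1) + (t - c j) * (y j - y (j - 1)) / (d j - c j)

/-- The clamped inverse of `L_{2,j}`:
`φ_j(t) = d_j` for `t > y_j`, `φ_j(t) = L_{2,j}⁻¹(t)` on `[y_{j−1}, y_j]`,
and `φ_j(t) = c_j` for `t < y_{j−1}`. -/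
noncomputable def clampInv (y c d : ℕ → ℝ) (j : ℕ) (t : ℝ) : ℝ :=
  if y j < t then d j
  else if y (j - 1) ≤ t then c j + (t - y (j - 1)) * (d j - c j) / (y j - y (j - 1))
  else c j

/-! `L_{2,j} ∘ φ_j` clamps its argument to the cell `[y_{j−1}, y_j]`, so the identity reduces to
adding up the clamps of one point `v ∈ [y_0, y_m]` to all the consecutive cells of the grid. -/

open Finset

theorem LFun_clampInv {y c d : ℕ → ℝ} {j : ℕ} (hy : y (j - 1) < y j) (hcd : c j < d j) (v : ℝ) :
    LFun y c d j (clampInv y c d j v) = max (y (j - 1)) (min (y j) v) := by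
  have hy' : y j - y (j - 1) ≠ 0 := sub_ne_zero.2 hy.ne'
  have hcd' : d j - c j ≠ 0 := sub_ne_zero.2 hcd.ne'
  unfold LFun clampInv
  split_ifs with hvy hyv
  · rw [min_eq_left hvy.le, max_eq_right hy.le]
    field_simp
    ring
  · rw [min_eq_right (not_lt.1 hvy), max_eq_right hyv]
    field_simp
    ring
  · rw [not_le] at hyv
    rw [min_eq_right (hyv.le.trans hy.le), max_eq_left hyv.le]
    field_simp
    ring

/-- The cell containing `v` contributes `F v`, each cell below it its top `F (y j)` and each cell
above it its bottom `F (y (j - 1))`: together these are `F (y 1), …, F (y (m - 1))`, once each. -/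
theorem sum_max_min_eq {α M : Type*} [LinearOrder α] [AddCommMonoid M] (F : α → M)
    {y : ℕ → α} {m : ℕ} (hm : 1 ≤ m) (hy : MonotoneOn y (Set.Iic m)) {v : α}
    (hv : v ∈ Set.Icc (y 0) (y m)) :
    ∑ j ∈ Icc 1 m, F (max (y (j - 1)) (min (y j) v)) = F v + ∑ j ∈ Icc 1 (m - 1), F (y j) := by
  obtain ⟨k, rfl⟩ := Nat.exists_eq_add_of_le' hm
  clear hm
  induction k with
  | zero => simp [min_eq_right hv.2, max_eq_right hv.1]
  | succ k ih =>
    have hy' : MonotoneOn y (Set.Iic (k + 1)) := hy.mono (Set.Iic_subset_Iic.2 (by omega))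
    rw [sum_Icc_succ_top (by omega)]
    simp only [Nat.add_sub_cancel] at ih ⊢
    rcases le_or_gt v (y (k + 1)) with hv_le | hv_gt
    · rw [ih hy' ⟨hv.1, hv_le⟩, max_eq_left ((min_le_right _ _).trans hv_le),
        sum_Icc_succ_top (by omega), add_assoc]
    · have hcells : ∀ j ∈ Icc 1 (k + 1), max (y (j - 1)) (min (y j) v) = y j := by
        intro j hj
        have hj := mem_Icc.1 hj
        have hyj : y j ≤ y (k + 1) := hy' (by simp; omega) (by simp) hj.2
        have hyj' : y (j - 1) ≤ y j := hy' (by simp; omega) (by simp; omega) (by omega)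
        rw [min_eq_left (hyj.trans hv_gt.le), max_eq_right hyj']
      rw [sum_congr rfl fun j hj => congrArg F (hcells j hj), min_eq_right hv.2,
        max_eq_right hv_gt.le, add_comm]

/-- Decomposition of a partial composition in the second variable:
`f_{i,0}(u, y) = ∑_{j=1}^m f_{i,j}(u, φ_j(y)) − ∑_{j=1}^{m−1} f_{i,0}(u, y_j)`
for every real `u` and every `y ∈ [y_0, y_m]`, where `f_{i,0}(x, y) = f(L_{1,i}(x), y)`
and `f_{i,j}(x, y) = f(L_{1,i}(x), L_{2,j}(y))`. -/
theorem decomposition_partial_composition (m : ℕ) (hm : 1 ≤ m) (y c d : ℕ → ℝ)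
    (hy : ∀ j ∈ Finset.Icc 1 m, y (j - 1) < y j)
    (hcd : ∀ j ∈ Finset.Icc 1 m, c j < d j)
    (f : ℝ → ℝ → ℝ) (L1 : ℝ → ℝ) :
    ∀ u : ℝ, ∀ v ∈ Set.Icc (y 0) (y m),
      f (L1 u) v = (∑ j ∈ Finset.Icc 1 m, f (L1 u) (LFun y c d j (clampInv y c d j v)))
                     - ∑ j ∈ Finset.Icc 1 (m - 1), f (L1 u) (y j) := by
  intro u v hv
  have hmono : MonotoneOn y (Set.Iic m) :=
    monotoneOn_of_le_add_one Set.ordConnected_Iic fun a _ _ ha =>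
      (hy (a + 1) (mem_Icc.2 ⟨by omega, ha⟩)).le
  rw [sum_congr rfl fun j hj => by rw [LFun_clampInv (hy j hj) (hcd j hj)],
    sum_max_min_eq (f (L1 u)) hm hmono hv, add_sub_cancel_right]
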